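/- Fix α ∈ (0,1/2), γ ∈ (0,α) and ω ∈ (0,1). Then P(Z1 > min{z_{1−α+γ}, Z̃2}) > α and P(Z1 > min{z_{1−α+γ}, Z̃2 + z_{1−γ}}) < α. -/

import Mathlib

open MeasureTheory ProbabilityTheory Real

/-- The standard normal distribution on `ℝ`. -/
noncomputable def stdNormal : Measure ℝ := gaussianReal 0 1

/-- The product of two independent standard normals on `ℝ × ℝ`. -/
noncomputable def stdNormal2 : Measure (ℝ × ℝ) := stdNormal.prod stdNormal

/-- For `ω ∈ [0,1)`, the pair `(Z₁, Z̃₂)` with `Z₁ p = p.1` and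
`Z̃₂ p = ω * p.1 + √(ω - ω²) * p.2` is, under `stdNormal2`, a centered bivariate Gaussian
vector with covariance matrix `[[1, ω], [ω, ω]]`. -/
noncomputable def Ztilde2 (ω : ℝ) (p : ℝ × ℝ) : ℝ := ω * p.1 + Real.sqrt (ω - ω ^ 2) * p.2

/-!
The only Gaussian fact needed is that `W = (Z₁ - Z̃₂) / √(1 - ω) = √(1 - ω) p.1 - √ω p.2` is again
standard normal, being a unit-norm combination of independent standard normals; hence
`P(Z₁ > Z̃₂ + z) = P(W > z / √(1 - ω))`. With `z = 0` this is `1/2 > α`, and the first event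
contains `{Z₁ > Z̃₂}`. The second event lies in `{Z₁ > z_{1-α+γ}} ∪ {Z₁ > Z̃₂ + z_{1-γ}}`, of
probability at most `(α - γ) + P(W > z_{1-γ} / √(1 - ω))`, and the last term is `< γ` because
`z_{1-γ} > 0` and `√(1 - ω) < 1`.
-/

instance : IsProbabilityMeasure stdNormal := by unfold stdNormal; infer_instance

instance : NullSingletonClass stdNormal := nullSingletonClass_gaussianReal one_ne_zero

lemma stdNormal2_map_linear (a b : ℝ) :
    stdNormal2.map (fun p ↦ a * p.1 + b * p.2) =
      gaussianReal 0 (⟨a ^ 2, sq_nonneg a⟩ + ⟨b ^ 2, sq_nonneg b⟩) := by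
  have hL : (fun p : ℝ × ℝ ↦ a * p.1 + b * p.2) =
      (fun q ↦ q.1 + q.2) ∘ Prod.map (a * ·) (b * ·) := rfl
  rw [hL, ← Measure.map_map (by fun_prop) (by fun_prop), stdNormal2,
    ← Measure.map_prod_map _ _ (by fun_prop) (by fun_prop), stdNormal,
    gaussianReal_map_const_mul, gaussianReal_map_const_mul]
  change _ ∗ _ = _
  rw [gaussianReal_conv_gaussianReal]
  simp only [mul_zero, add_zero, mul_one]
  rfl

lemma stdNormal2_map_linear_of_sq_add_sq {a b : ℝ} (hab : a ^ 2 + b ^ 2 = 1) :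
    stdNormal2.map (fun p ↦ a * p.1 + b * p.2) = stdNormal := by
  rw [stdNormal2_map_linear, stdNormal]
  congr
  ext
  exact hab

lemma stdNormal_Ioi_zero : stdNormal (Set.Ioi 0) = 2⁻¹ := by
  have hsymm : stdNormal (Set.Ioi 0) = stdNormal (Set.Iio 0) := by
    have := gaussianReal_map_neg (μ := 0) (v := 1)
    rw [neg_zero, ← stdNormal] at this
    conv_lhs => rw [← this]
    rw [Measure.map_apply measurable_neg measurableSet_Ioi]
    simp
  have hcompl : stdNormal (Set.Iio 0) + stdNormal (Set.Ioi 0) = 1 := by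
    rw [measure_congr Ioi_ae_eq_Ici, ← Set.compl_Iio, measure_add_measure_compl measurableSet_Iio,
      measure_univ]
  rw [← hsymm, ← two_mul] at hcompl
  exact ENNReal.eq_inv_of_mul_eq_one_left (by rw [mul_comm, hcompl])

lemma stdNormal_Ioi_of_Iic {z r : ℝ} (hr : 0 ≤ r)
    (hz : stdNormal (Set.Iic z) = ENNReal.ofReal r) :
    stdNormal (Set.Ioi z) = ENNReal.ofReal (1 - r) := by
  rw [← Set.compl_Iic, prob_compl_eq_one_sub measurableSet_Iic, hz, ENNReal.ofReal_sub _ hr,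
    ENNReal.ofReal_one]

lemma stdNormal_Ioi_lt_Ioi {z t : ℝ} (h : z < t) :
    stdNormal (Set.Ioi t) < stdNormal (Set.Ioi z) := by
  rw [← Set.Ioc_union_Ioi_eq_Ioi h.le,
    measure_union (Set.Ioc_disjoint_Ioi le_rfl) measurableSet_Ioi, add_comm]
  refine ENNReal.lt_add_right (measure_ne_top stdNormal _) ?_
  have : volume (Set.Ioc z t) ≠ 0 := by simp [h]
  exact fun h0 ↦ this (gaussianReal_absolutelyContinuous' 0 one_ne_zero h0)

lemma stdNormal2_preimage_fst (s : Set ℝ) : stdNormal2 (Prod.fst ⁻¹' s) = stdNormal s := by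
  rw [← Set.prod_univ, stdNormal2, Measure.prod_prod, measure_univ, mul_one]

lemma fst_sub_Ztilde2 {ω : ℝ} (hω : ω ∈ Set.Icc 0 1) (p : ℝ × ℝ) :
    p.1 - Ztilde2 ω p = √(1 - ω) * (√(1 - ω) * p.1 + -√ω * p.2) := by
  have hsqrt : √(ω - ω ^ 2) = √ω * √(1 - ω) := by
    rw [← Real.sqrt_mul hω.1]
    ring_nf
  have hsq : √(1 - ω) ^ 2 = 1 - ω := Real.sq_sqrt (by linarith [hω.2])
  rw [Ztilde2, hsqrt]
  linear_combination -p.1 * hsq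

lemma stdNormal2_setOf_Ztilde2_add_lt_fst {ω : ℝ} (hω : ω ∈ Set.Ico 0 1) (z : ℝ) :
    stdNormal2 {p | Ztilde2 ω p + z < p.1} = stdNormal (Set.Ioi (z / √(1 - ω))) := by
  have hc : 0 < √(1 - ω) := Real.sqrt_pos.2 (by linarith [hω.2])
  have hunit : √(1 - ω) ^ 2 + (-√ω) ^ 2 = 1 := by
    rw [neg_sq, Real.sq_sqrt (by linarith [hω.2]), Real.sq_sqrt hω.1]
    ring
  have hset : {p | Ztilde2 ω p + z < p.1} =
      (fun p : ℝ × ℝ ↦ √(1 - ω) * p.1 + -√ω * p.2) ⁻¹' Set.Ioi (z / √(1 - ω)) := by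
    ext p
    rw [Set.mem_preimage, Set.mem_Ioi, div_lt_iff₀' hc,
      ← fst_sub_Ztilde2 (Set.Ico_subset_Icc_self hω), Set.mem_ofPred_eq, lt_sub_iff_add_lt']
  rw [hset, ← Measure.map_apply (by fun_prop) measurableSet_Ioi,
    stdNormal2_map_linear_of_sq_add_sq hunit]

lemma stdNormal2_setOf_Ztilde2_lt_fst {ω : ℝ} (hω : ω ∈ Set.Ico 0 1) :
    stdNormal2 {p | Ztilde2 ω p < p.1} = 2⁻¹ := by
  simpa [stdNormal_Ioi_zero] using stdNormal2_setOf_Ztilde2_add_lt_fst hω 0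

lemma stdNormal2_setOf_Ztilde2_add_lt_fst_lt {ω z : ℝ} (hω : ω ∈ Set.Ioo 0 1) (hz : 0 < z) :
    stdNormal2 {p | Ztilde2 ω p + z < p.1} < stdNormal (Set.Ioi z) := by
  rw [stdNormal2_setOf_Ztilde2_add_lt_fst (Set.Ioo_subset_Ico_self hω)]
  refine stdNormal_Ioi_lt_Ioi ?_
  rw [lt_div_iff₀ (Real.sqrt_pos.2 (by linarith [hω.2]))]
  exact mul_lt_of_lt_one_right hz ((Real.sqrt_lt' one_pos).2 (by linarith [hω.1]))

lemma pos_of_stdNormal_Ioi_lt_half {z : ℝ} (h : stdNormal (Set.Ioi z) < 2⁻¹) : 0 < z := by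
  by_contra! hz
  exact (measure_mono (μ := stdNormal) (Set.Ioi_subset_Ioi hz)).not_gt
    (stdNormal_Ioi_zero ▸ h)

/-- `P(Z₁ > min{z_{1-α+γ}, Z̃₂}) > α` and
`P(Z₁ > min{z_{1-α+γ}, Z̃₂ + z_{1-γ}}) < α`. -/
theorem stmt2 (α γ ω : ℝ) (hα : α ∈ Set.Ioo (0 : ℝ) (1 / 2)) (hγ : γ ∈ Set.Ioo 0 α)
    (hω : ω ∈ Set.Ioo (0 : ℝ) 1)
    (zαγ zγ : ℝ)
    (hzαγ : stdNormal (Set.Iic zαγ) = ENNReal.ofReal (1 - α + γ))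
    (hzγ : stdNormal (Set.Iic zγ) = ENNReal.ofReal (1 - γ)) :
    ENNReal.ofReal α < stdNormal2 {p : ℝ × ℝ | min zαγ (Ztilde2 ω p) < p.1} ∧
    stdNormal2 {p : ℝ × ℝ | min zαγ (Ztilde2 ω p + zγ) < p.1} < ENNReal.ofReal α := by
  obtain ⟨hα0, hα2⟩ := hα
  obtain ⟨hγ0, hγα⟩ := hγ
  have hα_half : ENNReal.ofReal α < 2⁻¹ := by
    rw [← ENNReal.ofReal_ofNat 2, ← ENNReal.ofReal_inv_of_pos two_pos]
    exact (ENNReal.ofReal_lt_ofReal_iff (by norm_num)).2 (by linarith)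
  have htail_γ : stdNormal (Set.Ioi zγ) = ENNReal.ofReal γ := by
    rw [stdNormal_Ioi_of_Iic (by linarith) hzγ, sub_sub_cancel]
  have htail_αγ : stdNormal (Set.Ioi zαγ) = ENNReal.ofReal (α - γ) := by
    rw [stdNormal_Ioi_of_Iic (by linarith) hzαγ]
    ring_nf
  have hzγ_pos : 0 < zγ := pos_of_stdNormal_Ioi_lt_half <| htail_γ ▸
    (ENNReal.ofReal_lt_ofReal_iff hα0).2 hγα |>.trans hα_half
  constructor
  · calc ENNReal.ofReal α < stdNormal2 {p | Ztilde2 ω p < p.1} := by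
          rwa [stdNormal2_setOf_Ztilde2_lt_fst (Set.Ioo_subset_Ico_self hω)]
      _ ≤ stdNormal2 {p | min zαγ (Ztilde2 ω p) < p.1} :=
          measure_mono <| Set.ofPred_subset_ofPred.2 fun _ hp ↦ min_lt_iff.2 (Or.inr hp)
  · calc stdNormal2 {p | min zαγ (Ztilde2 ω p + zγ) < p.1}
        ≤ stdNormal2 (Prod.fst ⁻¹' Set.Ioi zαγ ∪ {p | Ztilde2 ω p + zγ < p.1}) :=
          measure_mono fun p (hp : min zαγ (Ztilde2 ω p + zγ) < p.1) ↦ min_lt_iff.1 hp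
      _ ≤ stdNormal2 (Prod.fst ⁻¹' Set.Ioi zαγ) + stdNormal2 {p | Ztilde2 ω p + zγ < p.1} :=
          measure_union_le _ _
      _ < stdNormal (Set.Ioi zαγ) + stdNormal (Set.Ioi zγ) := by
          rw [stdNormal2_preimage_fst]
          exact ENNReal.add_lt_add_left (measure_ne_top _ _)
            (stdNormal2_setOf_Ztilde2_add_lt_fst_lt hω hzγ_pos)
      _ = ENNReal.ofReal α := by
          rw [htail_αγ, htail_γ, ← ENNReal.ofReal_add (by linarith) hγ0.le, sub_add_cancel]
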